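/- arXiv:1609.01782 — 2 statements merged into one kernel-verified Lean document; each statement's English description precedes it below -/
import Mathlib

section
/- Let n ≥ 1 and set k = ⌈n/2⌉. The poset obtained by restricting the left weak order on S_n to AltAv_n(123) is order-isomorphic to the poset of integer partitions λ = (λ_1 ≥ λ_2 ≥ ⋯ ≥ λ_{k−1} ≥ 0) satisfying λ_i ≤ k − i for each i (Young diagrams contained in the staircase shape (k−1, k−2, …, 1)), ordered componentwise (containment of Young diagrams). In particular, this poset is a distributive lattice. -/
/-- `σ` contains the pattern `π`. -/
def containsPattern {n k : ℕ} (σ : Equiv.Perm (Fin n)) (π : Equiv.Perm (Fin k)) : Prop :=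
  ∃ f : Fin k → Fin n, StrictMono f ∧ ∀ a b : Fin k, σ (f a) < σ (f b) ↔ π a < π b

/-- The pattern 123. -/
def p123 : Equiv.Perm (Fin 3) := 1

/-- `σ` is alternating (up-down): zero-based, `σ(j) < σ(j+1)` for even `j` and
`σ(j) > σ(j+1)` for odd `j`. -/
def Alternating {n : ℕ} (σ : Equiv.Perm (Fin n)) : Prop :=
  ∀ (j : ℕ) (h : j + 1 < n),
    (Even j → σ ⟨j, by omega⟩ < σ ⟨j + 1, h⟩) ∧
    (Odd j → σ ⟨j + 1, h⟩ < σ ⟨j, by omega⟩)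

/-- `AltAv_n(123)`: alternating permutations avoiding 123. -/
def AltAv123 (n : ℕ) : Set (Equiv.Perm (Fin n)) :=
  {σ : Equiv.Perm (Fin n) | Alternating σ ∧ ¬ containsPattern σ p123}

/-- The inversion (position) set of `σ`. -/
def InvSet {n : ℕ} (σ : Equiv.Perm (Fin n)) : Set (Fin n × Fin n) :=
  {p | p.1 < p.2 ∧ σ p.2 < σ p.1}

/-!
In a 123-avoiding permutation, everything after the top of an ascent is smaller than it and
everything before the bottom of an ascent is larger than it. For an alternating σ (positions
counted from 0) this forces every pair starting at an odd position to be an inversion, and it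
makes the value at a valley 2i equal to the number of inversions in its row. The rows of two
such permutations are nested: in a row, only pairs ending at a peak or at the last position can
fail to be inversions, and an inversion ending at a peak propagates to every later position. So `Inv σ ⊆ Inv τ` iff `σ(2i) ≤ τ(2i)` at every valley, and
`σ(2i) - (⌊n/2⌋ - 1 - i)` is the required partition. Conversely, a partition λ in the staircase
is realised by putting `⌊n/2⌋ - 1 - i + λᵢ` at the valleys and the remaining values, in
decreasing order, at the other positions.
-/

open Equiv Finset

section Pattern123

variable {n : ℕ} {σ : Perm (Fin n)}

theorem not_containsPattern_p123_iff :
    ¬ containsPattern σ p123 ↔ ∀ a b c : Fin n, a < b → b < c → ¬ (σ a < σ b ∧ σ b < σ c) := by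
  constructor
  · rintro hσ a b c hab hbc ⟨h₁, h₂⟩
    refine hσ ⟨![a, b, c], fun x y hxy => ?_, fun x y => ?_⟩
    · fin_cases x <;> fin_cases y <;> simp_all; omega
    · fin_cases x <;> fin_cases y <;>
        simp [p123, h₁, h₂, h₁.trans h₂, h₁.not_gt, h₂.not_gt, (h₁.trans h₂).not_gt]
  · rintro h ⟨f, hf, hfσ⟩
    exact h (f 0) (f 1) (f 2) (hf (by decide)) (hf (by decide))
      ⟨(hfσ 0 1).2 (by decide), (hfσ 1 2).2 (by decide)⟩

variable (hσ : ¬ containsPattern σ p123) {a b c : Fin n}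
include hσ

theorem apply_lt_of_ascent_of_lt (hab : a < b) (hbc : b < c) (h : σ a < σ b) : σ c < σ b :=
  lt_of_le_of_ne (not_lt.1 fun h' => not_containsPattern_p123_iff.1 hσ a b c hab hbc ⟨h, h'⟩)
    (σ.injective.ne hbc.ne')

theorem lt_apply_of_ascent_of_lt (hab : a < b) (hbc : b < c) (h : σ b < σ c) : σ b < σ a :=
  lt_of_le_of_ne (not_lt.1 fun h' => not_containsPattern_p123_iff.1 hσ a b c hab hbc ⟨h', h⟩)
    (σ.injective.ne hab.ne')

end Pattern123

theorem not_containsPattern_p123_of_strictAntiOn {n : ℕ} {σ : Perm (Fin n)} (S : Set (Fin n))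
    (hS : StrictAntiOn σ S) (hSc : StrictAntiOn σ Sᶜ) : ¬ containsPattern σ p123 := by
  have hclass : ∀ x y, x < y → σ x < σ y → (x ∈ S ↔ y ∉ S) := fun x y hxy h => by
    constructor
    · exact fun hx hy => (hS hx hy hxy).not_gt h
    · exact fun hy => by_contra fun hx => (hSc hx hy hxy).not_gt h
  refine not_containsPattern_p123_iff.2 fun a b c hab hbc ⟨h₁, h₂⟩ => ?_
  have := hclass a b hab h₁
  have := hclass b c hbc h₂
  have := hclass a c (hab.trans hbc) (h₁.trans h₂)
  tauto

theorem eq_of_invSet_eq {n : ℕ} {σ τ : Perm (Fin n)} (h : InvSet σ = InvSet τ) : σ = τ := by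
  have hlt : ∀ a b, σ a < σ b → τ a < τ b := by
    intro a b hab
    rcases lt_trichotomy a b with hlt | rfl | hgt
    · refine lt_of_not_ge fun hτ => ?_
      have hinv : (a, b) ∈ InvSet τ := ⟨hlt, lt_of_le_of_ne hτ (τ.injective.ne hlt.ne')⟩
      exact hab.not_gt (h ▸ hinv).2
    · exact absurd hab (lt_irrefl _)
    · have hinv : (b, a) ∈ InvSet σ := ⟨hgt, hab⟩
      exact (h ▸ hinv).2
  have hmono : StrictMono (τ ∘ σ.symm) := fun x y hxy => hlt _ _ (by simpa using hxy)
  have hid : τ ∘ σ.symm = id :=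
    (hmono.range_inj strictMono_id).1 (by simp [Set.range_comp, Set.range_id])
  exact Equiv.ext fun a => by simpa using (congrFun hid (σ a)).symm

def rowInv {n : ℕ} (σ : Perm (Fin n)) (a : Fin n) : Finset (Fin n) :=
  {b | a < b ∧ σ b < σ a}

@[simp]
theorem mem_rowInv {n : ℕ} {σ : Perm (Fin n)} {a b : Fin n} :
    b ∈ rowInv σ a ↔ a < b ∧ σ b < σ a := by
  simp [rowInv]

theorem card_filter_apply_lt {n : ℕ} (σ : Perm (Fin n)) (x : Fin n) :
    #{b | σ b < x} = x := by
  rw [card_equiv σ (t := Iio x) (by simp), Fin.card_Iio]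

def valleyShape {n : ℕ} (σ : Perm (Fin n)) (i : Fin ((n + 1) / 2 - 1)) : ℕ :=
  σ ⟨2 * i, by omega⟩ - (n / 2 - 1 - i)

namespace AltAv123

variable {n : ℕ} {σ τ : Perm (Fin n)} {a b c : Fin n}

theorem apply_lt_apply_succ (hσ : σ ∈ AltAv123 n) (ha : Even (a : ℕ)) (h : (a : ℕ) + 1 < n) :
    σ a < σ ⟨a + 1, h⟩ :=
  (hσ.1 a h).1 ha

theorem apply_lt_of_even (hσ : σ ∈ AltAv123 n) (hb : Even (b : ℕ)) (hbn : (b : ℕ) + 1 < n)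
    (hab : a < b) : σ b < σ a :=
  lt_apply_of_ascent_of_lt hσ.2 hab (Fin.lt_def.2 (Nat.lt_succ_self _))
    (apply_lt_apply_succ hσ hb hbn)

theorem apply_lt_of_odd (hσ : σ ∈ AltAv123 n) (hb : Odd (b : ℕ)) (hbc : b < c) : σ c < σ b := by
  obtain ⟨j, hj⟩ := hb
  have hpeak : (⟨2 * j + 1, by omega⟩ : Fin n) = b := Fin.ext hj.symm
  have hascent := apply_lt_apply_succ hσ (a := ⟨2 * j, by omega⟩) (even_two_mul j)
    (show 2 * j + 1 < n by omega)
  rw [hpeak] at hascent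
  exact apply_lt_of_ascent_of_lt hσ.2 (Fin.lt_def.2 (show 2 * j < b by omega)) hbc hascent

theorem card_rowInv_of_even (hσ : σ ∈ AltAv123 n) (ha : Even (a : ℕ)) (han : (a : ℕ) + 1 < n) :
    #(rowInv σ a) = σ a := by
  rw [← card_filter_apply_lt σ (σ a)]
  congr 1
  ext b
  simp only [mem_rowInv, mem_filter, mem_univ, true_and, and_iff_right_iff_imp]
  intro hb
  refine lt_of_not_ge fun hba => ?_
  rcases hba.lt_or_eq with hba | rfl
  · exact (apply_lt_of_even hσ ha han hba).not_gt hb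
  · exact lt_irrefl _ hb

theorem val_apply_le_of_even (hσ : σ ∈ AltAv123 n) (ha : Even (a : ℕ)) (han : (a : ℕ) + 1 < n) :
    (σ a : ℕ) ≤ n - 2 - a := by
  have hsub : rowInv σ a ⊆ (Ioi a).erase ⟨a + 1, han⟩ := fun b hb => by
    rw [mem_rowInv] at hb
    refine mem_erase.2 ⟨?_, mem_Ioi.2 hb.1⟩
    rintro rfl
    exact (apply_lt_apply_succ hσ ha han).not_gt hb.2
  have := card_le_card hsub
  rw [card_rowInv_of_even hσ ha han, card_erase_of_mem (by simp [Fin.lt_def]), Fin.card_Ioi]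
    at this
  omega

theorem mem_rowInv_of_lt (hσ : σ ∈ AltAv123 n) (hτ : τ ∈ AltAv123 n) (hb : b ∈ rowInv σ a)
    (hb' : b ∉ rowInv τ a) (hbc : b < c) : c ∈ rowInv σ a := by
  rw [mem_rowInv] at hb hb' ⊢
  rcases Nat.even_or_odd b with heven | hodd
  · exact absurd ⟨hb.1, apply_lt_of_even hτ heven (by omega) hb.1⟩ hb'
  · exact ⟨hb.1.trans hbc, (apply_lt_of_odd hσ hodd hbc).trans hb.2⟩

theorem rowInv_subset_or_subset (hσ : σ ∈ AltAv123 n) (hτ : τ ∈ AltAv123 n) (a : Fin n) :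
    rowInv σ a ⊆ rowInv τ a ∨ rowInv τ a ⊆ rowInv σ a := by
  by_contra! h
  obtain ⟨⟨b, hbσ, hbτ⟩, ⟨c, hcτ, hcσ⟩⟩ := And.imp not_subset.1 not_subset.1 h
  rcases lt_trichotomy b c with hbc | rfl | hcb
  · exact hcσ (mem_rowInv_of_lt hσ hτ hbσ hbτ hbc)
  · exact hcσ hbσ
  · exact hbτ (mem_rowInv_of_lt hτ hσ hcτ hcσ hcb)

theorem rowInv_subset_rowInv_iff (hσ : σ ∈ AltAv123 n) (hτ : τ ∈ AltAv123 n)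
    (ha : Even (a : ℕ)) (han : (a : ℕ) + 1 < n) : rowInv σ a ⊆ rowInv τ a ↔ σ a ≤ τ a := by
  rw [Fin.le_iff_val_le_val, ← card_rowInv_of_even hσ ha han, ← card_rowInv_of_even hτ ha han]
  refine ⟨card_le_card, fun hcard => ?_⟩
  rcases rowInv_subset_or_subset hσ hτ a with hs | hs
  · exact hs
  · exact (eq_of_subset_of_card_le hs hcard).superset

theorem invSet_subset_iff (hσ : σ ∈ AltAv123 n) (hτ : τ ∈ AltAv123 n) :
    InvSet σ ⊆ InvSet τ ↔ ∀ a : Fin n, Even (a : ℕ) → (a : ℕ) + 2 < n → σ a ≤ τ a := by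
  constructor
  · refine fun h a ha han => (rowInv_subset_rowInv_iff hσ hτ ha (by omega)).1 fun b hb => ?_
    exact mem_rowInv.2 (@h (a, b) (mem_rowInv.1 hb))
  · rintro h ⟨a, b⟩ ⟨hab, hba⟩
    dsimp only at hab hba ⊢
    refine ⟨hab, ?_⟩
    rcases Nat.even_or_odd a with ha | ha
    · by_cases han : (a : ℕ) + 2 < n
      · have hb := (rowInv_subset_rowInv_iff hσ hτ ha (by omega)).2 (h a ha han)
          (mem_rowInv.2 ⟨hab, hba⟩)
        exact (mem_rowInv.1 hb).2
      · rw [Fin.lt_def] at hab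
        have hsucc : (⟨a + 1, by omega⟩ : Fin n) = b := Fin.ext (show (a : ℕ) + 1 = b by omega)
        have := apply_lt_apply_succ hσ ha (by omega)
        rw [hsucc] at this
        exact absurd hba this.not_gt
    · exact apply_lt_of_odd hτ ha hab

theorem val_apply_two_mul_add_le (hσ : σ ∈ AltAv123 n) {i j : ℕ} (hij : i ≤ j)
    (hj : 2 * j + 1 < n) : (σ ⟨2 * j, by omega⟩ : ℕ) + (j - i) ≤ σ ⟨2 * i, by omega⟩ := by
  induction j, hij using Nat.le_induction with
  | base => simp
  | succ j hij ih =>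
    have hstep := apply_lt_of_even hσ (a := ⟨2 * j, by omega⟩) (b := ⟨2 * (j + 1), by omega⟩)
      (even_two_mul _) hj (Fin.lt_def.2 (show 2 * j < 2 * (j + 1) by omega))
    have := ih (by omega)
    rw [Fin.lt_def] at hstep
    omega

theorem sub_le_val_apply_two_mul (hσ : σ ∈ AltAv123 n) {i : ℕ} (hi : 2 * i + 1 < n) :
    n / 2 - 1 - i ≤ σ ⟨2 * i, by omega⟩ := by
  have := val_apply_two_mul_add_le hσ (i := i) (j := n / 2 - 1) (by omega) (by omega)
  omega

theorem valleyShape_antitone (hσ : σ ∈ AltAv123 n) : Antitone (valleyShape σ) := by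
  intro i j hij
  have := val_apply_two_mul_add_le hσ (Fin.le_def.1 hij) (by omega)
  have := sub_le_val_apply_two_mul hσ (i := j) (by omega)
  unfold valleyShape
  omega

theorem valleyShape_le (hσ : σ ∈ AltAv123 n) (i : Fin ((n + 1) / 2 - 1)) :
    valleyShape σ i ≤ (n + 1) / 2 - 1 - i := by
  have := val_apply_le_of_even hσ (a := ⟨2 * i, by omega⟩) (even_two_mul _)
    (show 2 * i + 1 < n by omega)
  dsimp only at this
  unfold valleyShape
  omega

theorem invSet_subset_iff_valleyShape_le (hσ : σ ∈ AltAv123 n) (hτ : τ ∈ AltAv123 n) :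
    InvSet σ ⊆ InvSet τ ↔ ∀ i, valleyShape σ i ≤ valleyShape τ i := by
  rw [invSet_subset_iff hσ hτ]
  constructor
  · intro h i
    have := Fin.le_def.1 (h ⟨2 * i, by omega⟩ (even_two_mul _) (by simp only; omega))
    unfold valleyShape
    omega
  · rintro h ⟨a, ha⟩ ⟨i, rfl⟩ hin
    dsimp only at hin
    have hi := h ⟨i, by omega⟩
    unfold valleyShape at hi
    dsimp only at hi
    have := sub_le_val_apply_two_mul hσ (i := i) (by omega)
    have := sub_le_val_apply_two_mul hτ (i := i) (by omega)
    simp only [← two_mul, Fin.le_def]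
    omega

end AltAv123

def columnLength (l : ℕ → ℕ) (m c : ℕ) : ℕ :=
  #{i ∈ range m | c ≤ l i}

theorem columnLength_le (l : ℕ → ℕ) (m c : ℕ) : columnLength l m c ≤ m :=
  (card_filter_le _ _).trans (card_range m).le

theorem columnLength_antitone (l : ℕ → ℕ) (m : ℕ) : Antitone (columnLength l m) :=
  fun _ _ hcc' => card_le_card fun _ hx => by
    rw [mem_filter] at hx ⊢
    exact ⟨hx.1, hcc'.trans hx.2⟩

theorem lt_columnLength_iff {l : ℕ → ℕ} (hl : Antitone l) {m c i : ℕ} (hi : i < m) :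
    i < columnLength l m c ↔ c ≤ l i := by
  constructor
  · intro h
    by_contra! hli
    have hsub : {x ∈ range m | c ≤ l x} ⊆ range i := fun x hx => by
      rw [mem_filter] at hx
      exact mem_range.2 (lt_of_not_ge fun hix => ((hl hix).trans_lt hli).not_ge hx.2)
    exact (card_le_card hsub).not_gt (by rwa [card_range])
  · intro h
    have hsub : range (i + 1) ⊆ {x ∈ range m | c ≤ l x} := fun x hx => by
      rw [mem_range] at hx
      exact mem_filter.2 ⟨mem_range.2 (by omega), h.trans (hl (by omega))⟩
    have := card_le_card hsub
    rwa [card_range] at this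

section Construction

variable {n : ℕ} {l : ℕ → ℕ}

def valleyVal (n : ℕ) (l : ℕ → ℕ) (i : ℕ) : ℕ :=
  n / 2 - 1 - i + l i

-- The `j`-th largest value not taken by a valley: exactly `λ'_{k-j}` valley values exceed it,
-- where `λ'` is the conjugate partition and `k = ⌈n/2⌉`.
def peakVal (n : ℕ) (l : ℕ → ℕ) (j : ℕ) : ℕ :=
  n - 1 - j - columnLength l (n / 2) ((n + 1) / 2 - j)

def shapeFun (n : ℕ) (l : ℕ → ℕ) (p : ℕ) : ℕ :=
  if p % 2 = 0 ∧ p + 1 < n then valleyVal n l (p / 2) else peakVal n l (p / 2)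

theorem valleyVal_lt_valleyVal (hl : Antitone l) {i i' : ℕ} (h : i < i') (hi' : i' < n / 2) :
    valleyVal n l i' < valleyVal n l i := by
  have := hl h.le
  unfold valleyVal
  omega

theorem peakVal_lt_peakVal {j j' : ℕ} (h : j < j') (hj' : 2 * j' < n) :
    peakVal n l j' < peakVal n l j := by
  have := columnLength_antitone l (n / 2) (show (n + 1) / 2 - j' ≤ (n + 1) / 2 - j by omega)
  have := columnLength_le l (n / 2) ((n + 1) / 2 - j')
  unfold peakVal
  omega

theorem peakVal_lt_valleyVal (hl : Antitone l) {i j : ℕ} (hi : i < n / 2) (hj : 2 * j < n)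
    (h : (n + 1) / 2 - j ≤ l i) : peakVal n l j < valleyVal n l i := by
  have := (lt_columnLength_iff hl hi).2 h
  unfold peakVal valleyVal
  omega

theorem valleyVal_lt_peakVal (hl : Antitone l) {i j : ℕ} (hi : i < n / 2)
    (h : l i < (n + 1) / 2 - j) : valleyVal n l i < peakVal n l j := by
  have := mt (lt_columnLength_iff hl hi (c := (n + 1) / 2 - j)).1 h.not_ge
  have := columnLength_le l (n / 2) ((n + 1) / 2 - j)
  unfold peakVal valleyVal
  omega

theorem shapeFun_injOn (hl : Antitone l) : Set.InjOn (shapeFun n l) (Set.Iio n) := by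
  intro p hp p' hp' heq
  simp only [Set.mem_Iio] at hp hp'
  by_contra hne
  unfold shapeFun at heq
  split_ifs at heq with h h'
  · rcases lt_or_gt_of_ne (show p / 2 ≠ p' / 2 by omega) with hlt | hlt
    · exact (valleyVal_lt_valleyVal hl hlt (by omega)).ne' heq
    · exact (valleyVal_lt_valleyVal hl hlt (by omega)).ne heq
  · rcases le_or_gt ((n + 1) / 2 - p' / 2) (l (p / 2)) with hle | hlt
    · exact (peakVal_lt_valleyVal hl (by omega) (by omega) hle).ne' heq
    · exact (valleyVal_lt_peakVal hl (by omega) hlt).ne heq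
  · rcases le_or_gt ((n + 1) / 2 - p / 2) (l (p' / 2)) with hle | hlt
    · exact (peakVal_lt_valleyVal hl (by omega) (by omega) hle).ne heq
    · exact (valleyVal_lt_peakVal hl (by omega) hlt).ne' heq
  · rcases lt_or_gt_of_ne (show p / 2 ≠ p' / 2 by omega) with hlt | hlt
    · exact (peakVal_lt_peakVal hlt (by omega)).ne' heq
    · exact (peakVal_lt_peakVal hlt (by omega)).ne heq

theorem shapeFun_lt (hb : ∀ i, l i ≤ (n + 1) / 2 - 1 - i) {p : ℕ} (hp : p < n) :
    shapeFun n l p < n := by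
  have := hb (p / 2)
  unfold shapeFun valleyVal peakVal
  split_ifs <;> omega

theorem exists_perm_val_eq_shapeFun (hl : Antitone l) (hb : ∀ i, l i ≤ (n + 1) / 2 - 1 - i) :
    ∃ σ : Perm (Fin n), ∀ p, (σ p : ℕ) = shapeFun n l p :=
  ⟨Equiv.ofBijective (fun p => ⟨shapeFun n l p, shapeFun_lt hb p.2⟩)
    (Finite.injective_iff_bijective.1 fun p q h =>
      Fin.ext (shapeFun_injOn hl p.2 q.2 (congrArg Fin.val h))), fun _ => rfl⟩

theorem mem_altAv123_of_val_eq_shapeFun (hl : Antitone l)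
    (hb : ∀ i, l i ≤ (n + 1) / 2 - 1 - i) {σ : Perm (Fin n)}
    (hσ : ∀ p, (σ p : ℕ) = shapeFun n l p) : σ ∈ AltAv123 n := by
  refine ⟨fun j hj => ⟨fun heven => ?_, fun hodd => ?_⟩, ?_⟩
  · rw [Nat.even_iff] at heven
    have := hb (j / 2)
    rw [Fin.lt_def, hσ, hσ]
    dsimp only
    unfold shapeFun
    rw [if_pos ⟨heven, hj⟩, if_neg (by omega), show (j + 1) / 2 = j / 2 by omega]
    exact valleyVal_lt_peakVal hl (by omega) (by omega)
  · rw [Nat.odd_iff] at hodd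
    rw [Fin.lt_def, hσ, hσ]
    dsimp only
    unfold shapeFun
    rw [if_neg (show ¬(j % 2 = 0 ∧ j + 1 < n) by omega)]
    split_ifs with hvalley
    · have := hb ((j + 1) / 2)
      exact valleyVal_lt_peakVal hl (by omega) (by omega)
    · exact peakVal_lt_peakVal (by omega) (by omega)
  · refine not_containsPattern_p123_of_strictAntiOn {p | (p : ℕ) % 2 = 0 ∧ (p : ℕ) + 1 < n}
      ?_ ?_ <;> intro p hp q hq hpq <;>
      simp only [Set.mem_compl_iff, Set.mem_ofPred_eq] at hp hq <;>
      rw [Fin.lt_def] at hpq ⊢ <;> rw [hσ, hσ] <;> unfold shapeFun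
    · rw [if_pos hp, if_pos hq]
      exact valleyVal_lt_valleyVal hl (by omega) (by omega)
    · rw [if_neg hp, if_neg hq]
      exact peakVal_lt_peakVal (by omega) (by omega)

end Construction

theorem exists_mem_altAv123_valleyShape_eq {n : ℕ} (l : Fin ((n + 1) / 2 - 1) → ℕ)
    (hl : Antitone l) (hb : ∀ i, l i ≤ (n + 1) / 2 - 1 - i) :
    ∃ σ ∈ AltAv123 n, valleyShape σ = l := by
  set L : ℕ → ℕ := fun i => if h : i < (n + 1) / 2 - 1 then l ⟨i, h⟩ else 0 with hL
  have hLl : ∀ i : Fin ((n + 1) / 2 - 1), L i = l i := fun i => dif_pos i.2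
  have hL_anti : Antitone L := fun i j hij => by
    by_cases hj : j < (n + 1) / 2 - 1
    · simp only [hL, dif_pos hj, dif_pos (hij.trans_lt hj)]
      exact hl (Fin.le_def.2 hij)
    · simp [hL, hj]
  have hL_le : ∀ i, L i ≤ (n + 1) / 2 - 1 - i := fun i => by
    by_cases hi : i < (n + 1) / 2 - 1
    · simpa only [hL, dif_pos hi] using hb ⟨i, hi⟩
    · simp [hL, hi]
  obtain ⟨σ, hσ⟩ := exists_perm_val_eq_shapeFun hL_anti hL_le
  refine ⟨σ, mem_altAv123_of_val_eq_shapeFun hL_anti hL_le hσ, funext fun i => ?_⟩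
  unfold valleyShape
  rw [hσ]
  dsimp only
  unfold shapeFun valleyVal
  rw [if_pos (by omega), show 2 * (i : ℕ) / 2 = i by omega, hLl]
  omega

theorem stmt14_general (n : ℕ) :
    -- with k = ⌈n/2⌉, the left weak order on AltAv_n(123) is isomorphic to the
    -- lattice of Young diagrams contained in the staircase (k-1, k-2, …, 1),
    -- ordered componentwise
    ∃ f : {σ : Equiv.Perm (Fin n) // σ ∈ AltAv123 n} →
        {l : Fin ((n + 1) / 2 - 1) → ℕ //
          (∀ i j, i ≤ j → l j ≤ l i) ∧ ∀ i, l i ≤ (n + 1) / 2 - 1 - (i : ℕ)},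
      Function.Bijective f ∧
      ∀ σ τ, (InvSet σ.1 ⊆ InvSet τ.1 ↔ ∀ i, (f σ).1 i ≤ (f τ).1 i) := by
  open AltAv123 in
  refine ⟨fun σ => ⟨valleyShape σ.1, valleyShape_antitone σ.2, valleyShape_le σ.2⟩,
    ⟨fun σ τ hστ => ?_, fun l => ?_⟩, fun σ τ => invSet_subset_iff_valleyShape_le σ.2 τ.2⟩
  · have hshape : valleyShape σ.1 = valleyShape τ.1 := congrArg Subtype.val hστ
    have hle := (invSet_subset_iff_valleyShape_le σ.2 τ.2).2 (by simp [hshape])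
    have hge := (invSet_subset_iff_valleyShape_le τ.2 σ.2).2 (by simp [hshape])
    exact Subtype.ext (eq_of_invSet_eq (hle.antisymm hge))
  · obtain ⟨σ, hσ, hshape⟩ := exists_mem_altAv123_valleyShape_eq l.1 l.2.1 l.2.2
    exact ⟨⟨σ, hσ⟩, Subtype.ext hshape⟩

theorem stmt14 (n : ℕ) (hn : 1 ≤ n) :
    -- with k = ⌈n/2⌉, the left weak order on AltAv_n(123) is isomorphic to the
    -- lattice of Young diagrams contained in the staircase (k-1, k-2, …, 1),
    -- ordered componentwise
    ∃ f : {σ : Equiv.Perm (Fin n) // σ ∈ AltAv123 n} →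
        {l : Fin ((n + 1) / 2 - 1) → ℕ //
          (∀ i j, i ≤ j → l j ≤ l i) ∧ ∀ i, l i ≤ (n + 1) / 2 - 1 - (i : ℕ)},
      Function.Bijective f ∧
      ∀ σ τ, (InvSet σ.1 ⊆ InvSet τ.1 ↔ ∀ i, (f σ).1 i ≤ (f τ).1 i) :=
  stmt14_general n
end

section
/- Fix n ≥ 1 and let Q be either the set Av_n(132,312) partially ordered by the right weak order, or the set AltAv_n(123) partially ordered by the left weak order. Then for any σ, σ′ ∈ Q, the pair {σ, σ′} has a greatest lower bound π ∈ Q and a least upper bound ρ ∈ Q (with respect to the restricted order), and the corresponding permutation matrices satisfy M_σ + M_{σ′} = M_π + M_ρ. -/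
/-- The pattern 132. -/
def p132 : Equiv.Perm (Fin 3) := Equiv.swap 1 2
/-- The pattern 312. -/
def p312 : Equiv.Perm (Fin 3) := (finRotate 3)⁻¹

/-- `Av_n(132,312)`. -/
def Av132312 (n : ℕ) : Set (Equiv.Perm (Fin n)) :=
  {σ : Equiv.Perm (Fin n) | ¬ containsPattern σ p132 ∧ ¬ containsPattern σ p312}

/-- The inversion value set of `σ` (right weak order: `σ ≤_R τ ↔ Invv σ ⊆ Invv τ`). -/
def Invv {n : ℕ} (σ : Equiv.Perm (Fin n)) : Set (Fin n × Fin n) :=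
  {p | ∃ i j : Fin n, i < j ∧ σ j < σ i ∧ p = (σ j, σ i)}

/-- The permutation matrix of `σ`, viewed as a vector in `ℝ^{n×n}`. -/
def permMatrix {n : ℕ} (σ : Equiv.Perm (Fin n)) : Fin n × Fin n → ℝ :=
  fun p => if σ p.1 = p.2 then 1 else 0

/-!
For `τ, τ'` in a class cut out by conditions on inversion sets that are stable under `∩` and
`∪`, the meet and join in the weak order are the permutations with inversion sets
`Inv τ ∩ Inv τ'` and `Inv τ ∪ Inv τ'`, as soon as these are inversion sets at all, i.e. the
intersection is cotransitive and the union transitive. If moreover no position lies both on an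
inversion of `τ` missing from `τ'` and on one of `τ'` missing from `τ`, then at each position the
meet has the inversions of one of `τ, τ'` and the join those of the other. A value is determined
by the inversions through its position, so the meet and join take the values `τ i, τ' i` in
some order: this is `M_τ + M_τ' = M_π + M_ρ`.

Passing to inverses (`Invv σ = Inv σ⁻¹`), `Av(132,312)` becomes the class of `τ` with no `τ j`
above both `τ i` and `τ k` for `i < j < k`. An alternating permutation avoids `123` exactly when
its inversion set contains the fixed set `altForced n` and misses the even ascents, and
`altForced n` contains `(i, j)` or `(j, k)` for all `i < j < k`. Each description gives the three
conditions above.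
-/
open Finset

variable {n : ℕ}

section Patterns

lemma containsPattern_iff_strictMono {k : ℕ} (σ : Equiv.Perm (Fin n)) (π : Equiv.Perm (Fin k)) :
    containsPattern σ π ↔ ∃ f : Fin k → Fin n, StrictMono f ∧ StrictMono (σ ∘ f ∘ π.symm) := by
  refine exists_congr fun f => and_congr_right fun _ => ⟨fun h x y hxy => ?_, fun h a b => ?_⟩
  · simpa [h] using hxy
  · simpa using h.lt_iff_lt (a := π a) (b := π b)

lemma containsPattern_three_iff (σ : Equiv.Perm (Fin n)) (π : Equiv.Perm (Fin 3)) :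
    containsPattern σ π ↔ ∃ i j k, i < j ∧ j < k ∧
      σ (![i, j, k] (π.symm 0)) < σ (![i, j, k] (π.symm 1)) ∧
      σ (![i, j, k] (π.symm 1)) < σ (![i, j, k] (π.symm 2)) := by
  simp only [containsPattern_iff_strictMono, Fin.strictMono_iff_lt_succ, Fin.forall_fin_two]
  constructor
  · rintro ⟨f, hf, hg⟩
    have hf3 : ![f 0, f 1, f 2] = f := by ext a; fin_cases a <;> rfl
    exact ⟨f 0, f 1, f 2, hf.1, hf.2, hf3 ▸ hg⟩
  · rintro ⟨i, j, k, hij, hjk, hg⟩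
    exact ⟨![i, j, k], ⟨hij, hjk⟩, hg⟩

lemma containsPattern_p132_iff (σ : Equiv.Perm (Fin n)) :
    containsPattern σ p132 ↔ ∃ i j k, i < j ∧ j < k ∧ σ i < σ k ∧ σ k < σ j :=
  containsPattern_three_iff σ p132

lemma containsPattern_p312_iff (σ : Equiv.Perm (Fin n)) :
    containsPattern σ p312 ↔ ∃ i j k, i < j ∧ j < k ∧ σ j < σ k ∧ σ k < σ i :=
  containsPattern_three_iff σ p312

lemma containsPattern_p123_iff (σ : Equiv.Perm (Fin n)) :
    containsPattern σ p123 ↔ ∃ i j k, i < j ∧ j < k ∧ σ i < σ j ∧ σ j < σ k :=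
  containsPattern_three_iff σ p123

end Patterns

section InversionSets

def PairTransitive (E : Set (Fin n × Fin n)) : Prop :=
  ∀ ⦃i j k⦄, (i, j) ∈ E → (j, k) ∈ E → (i, k) ∈ E

def PairCotransitive (E : Set (Fin n × Fin n)) : Prop :=
  ∀ ⦃i j k⦄, i < j → j < k → (i, k) ∈ E → (i, j) ∈ E ∨ (j, k) ∈ E

def Touches (E : Set (Fin n × Fin n)) (i : Fin n) : Prop :=
  ∃ j, (j, i) ∈ E ∨ (i, j) ∈ E

/-- `ValueLT E j i` says that `j` gets the smaller value in a permutation whose inversion set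
is `E`. -/
def ValueLT (E : Set (Fin n × Fin n)) (j i : Fin n) : Prop :=
  (j < i ∧ (j, i) ∉ E) ∨ (i < j ∧ (i, j) ∈ E)

lemma pairTransitive_invSet (σ : Equiv.Perm (Fin n)) : PairTransitive (InvSet σ) :=
  fun _ _ _ hij hjk => ⟨hij.1.trans hjk.1, hjk.2.trans hij.2⟩

lemma pairCotransitive_invSet (σ : Equiv.Perm (Fin n)) : PairCotransitive (InvSet σ) := by
  intro i j k hij hjk hik
  rcases lt_or_gt_of_ne (σ.injective.ne hij.ne) with h | h
  · exact Or.inr ⟨hjk, hik.2.trans h⟩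
  · exact Or.inl ⟨hij, h⟩

lemma apply_lt_apply_iff_valueLT (σ : Equiv.Perm (Fin n)) (j i : Fin n) :
    σ j < σ i ↔ ValueLT (InvSet σ) j i := by
  rcases lt_trichotomy j i with h | rfl | h
  · simp [ValueLT, InvSet, h, h.not_gt, (σ.injective.ne h.ne).le_iff_lt]
  · simp [ValueLT]
  · simp [ValueLT, InvSet, h, h.not_gt]

lemma card_filter_apply_lt_s16 (σ : Equiv.Perm (Fin n)) (i : Fin n) :
    #{j | σ j < σ i} = σ i := by
  rw [card_equiv σ (t := Iio (σ i)) (by simp), Fin.card_Iio]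

lemma apply_eq_of_not_touches_symmDiff {π τ : Equiv.Perm (Fin n)} {i : Fin n}
    (h : ¬ Touches (symmDiff (InvSet π) (InvSet τ)) i) : π i = τ i := by
  have hvalue : ∀ j, ValueLT (InvSet π) j i ↔ ValueLT (InvSet τ) j i := by
    intro j
    simp only [Touches, not_exists, not_or, Set.mem_symmDiff, not_and_or, not_not] at h
    have := h j
    unfold ValueLT
    tauto
  refine Fin.ext ?_
  rw [← card_filter_apply_lt_s16 π, ← card_filter_apply_lt_s16 τ]
  exact congrArg card <| filter_congr fun j _ => by
    rw [apply_lt_apply_iff_valueLT, apply_lt_apply_iff_valueLT, hvalue]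

end InversionSets

section Realization

variable {E : Set (Fin n × Fin n)}

lemma valueLT_irrefl (i : Fin n) : ¬ ValueLT E i i := by
  simp [ValueLT]

lemma valueLT_or_valueLT {i j : Fin n} (h : i ≠ j) : ValueLT E i j ∨ ValueLT E j i := by
  unfold ValueLT
  rcases lt_or_gt_of_ne h with h | h <;> tauto

lemma valueLT_trans (htr : PairTransitive E) (hcot : PairCotransitive E) {a b c : Fin n}
    (hab : ValueLT E a b) (hbc : ValueLT E b c) : ValueLT E a c := by
  unfold ValueLT at *
  rcases hab with ⟨hab, hab'⟩ | ⟨hba, hba'⟩ <;> rcases hbc with ⟨hbc, hbc'⟩ | ⟨hcb, hcb'⟩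
  · exact Or.inl ⟨hab.trans hbc, fun hac => (hcot hab hbc hac).elim hab' hbc'⟩
  · rcases lt_trichotomy a c with hac | rfl | hca
    · exact Or.inl ⟨hac, fun h => hab' (htr h hcb')⟩
    · exact absurd hcb' hab'
    · exact Or.inr ⟨hca, (hcot hca hab hcb').resolve_right hab'⟩
  · rcases lt_trichotomy a c with hac | rfl | hca
    · exact Or.inl ⟨hac, fun h => hbc' (htr hba' h)⟩
    · exact absurd hba' hbc'
    · exact Or.inr ⟨hca, (hcot hbc hca hba').resolve_left hbc'⟩
  · exact Or.inr ⟨hcb.trans hba, htr hcb' hba'⟩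

open scoped Classical in
/-- The value at `i` of the permutation whose inversion set is `E`. -/
noncomputable def valueRank (E : Set (Fin n × Fin n)) (i : Fin n) : Fin n :=
  ⟨#{j | ValueLT E j i}, by
    simpa using card_lt_univ_of_notMem (x := i) (by simp [valueLT_irrefl])⟩

variable (htr : PairTransitive E) (hcot : PairCotransitive E)
include htr hcot

lemma valueRank_lt_valueRank {i j : Fin n} (h : ValueLT E j i) :
    valueRank E j < valueRank E i := by
  simp only [valueRank, Fin.mk_lt_mk]
  apply card_lt_card
  refine ssubset_iff_of_subset (fun k hk => ?_) |>.2 ⟨j, by simpa using h, by simp [valueLT_irrefl]⟩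
  simp only [mem_filter, mem_univ, true_and] at hk ⊢
  exact valueLT_trans htr hcot hk h

lemma valueRank_lt_valueRank_iff {i j : Fin n} :
    valueRank E j < valueRank E i ↔ ValueLT E j i := by
  refine ⟨fun h => ?_, valueRank_lt_valueRank htr hcot⟩
  have hji : j ≠ i := by rintro rfl; exact h.false
  exact (valueLT_or_valueLT hji).resolve_right fun h' =>
    (valueRank_lt_valueRank htr hcot h').asymm h

lemma valueRank_injective : Function.Injective (valueRank E) := by
  intro i j hij
  by_contra hne
  rcases valueLT_or_valueLT hne with h | h
  · exact (valueRank_lt_valueRank htr hcot h).ne hij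
  · exact (valueRank_lt_valueRank htr hcot h).ne' hij

/-- A set of pairs `i < j` is an inversion set exactly when it is transitive and
cotransitive; here is the nontrivial direction. -/
theorem exists_invSet_eq (hlt : ∀ p ∈ E, p.1 < p.2) : ∃ π : Equiv.Perm (Fin n), InvSet π = E := by
  refine ⟨Equiv.ofBijective _ (Finite.injective_iff_bijective.1 (valueRank_injective htr hcot)),
    Set.ext fun ⟨i, j⟩ => ?_⟩
  change i < j ∧ valueRank E j < valueRank E i ↔ _
  rw [valueRank_lt_valueRank_iff htr hcot, ValueLT]
  constructor
  · rintro ⟨hij, ⟨hji, -⟩ | ⟨-, h⟩⟩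
    exacts [absurd hji hij.asymm, h]
  · exact fun h => ⟨hlt _ h, Or.inr ⟨hlt _ h, h⟩⟩

end Realization

section MeetJoin

variable {τ τ' : Equiv.Perm (Fin n)}

lemma Touches.mono {E F : Set (Fin n × Fin n)} (hEF : E ⊆ F) {i : Fin n} :
    Touches E i → Touches F i :=
  fun ⟨j, hj⟩ => ⟨j, hj.imp (@hEF _) (@hEF _)⟩

lemma pairTransitive_inter_invSet (τ τ' : Equiv.Perm (Fin n)) :
    PairTransitive (InvSet τ ∩ InvSet τ') :=
  fun _ _ _ hij hjk =>
    ⟨pairTransitive_invSet τ hij.1 hjk.1, pairTransitive_invSet τ' hij.2 hjk.2⟩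

lemma pairCotransitive_union_invSet (τ τ' : Equiv.Perm (Fin n)) :
    PairCotransitive (InvSet τ ∪ InvSet τ') := by
  rintro i j k hij hjk (h | h)
  · exact (pairCotransitive_invSet τ hij hjk h).imp Or.inl Or.inl
  · exact (pairCotransitive_invSet τ' hij hjk h).imp Or.inr Or.inr

lemma apply_eq_of_not_touches_sdiff {π ρ : Equiv.Perm (Fin n)}
    (hπ : InvSet π = InvSet τ ∩ InvSet τ') (hρ : InvSet ρ = InvSet τ ∪ InvSet τ') {i : Fin n}
    (h : ¬ Touches (InvSet τ \ InvSet τ') i) : π i = τ i ∧ ρ i = τ' i := by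
  constructor <;> refine apply_eq_of_not_touches_symmDiff fun h' => h (h'.mono fun p hp => ?_)
  · rw [hπ, Set.mem_symmDiff, Set.mem_inter_iff] at hp
    exact ⟨by tauto, by tauto⟩
  · rw [hρ, Set.mem_symmDiff, Set.mem_union] at hp
    exact ⟨by tauto, by tauto⟩

theorem exists_invSet_eq_inter_union
    (hcot : PairCotransitive (InvSet τ ∩ InvSet τ')) (htr : PairTransitive (InvSet τ ∪ InvSet τ'))
    (hsep : ∀ i, ¬ (Touches (InvSet τ \ InvSet τ') i ∧ Touches (InvSet τ' \ InvSet τ) i)) :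
    ∃ π ρ : Equiv.Perm (Fin n), InvSet π = InvSet τ ∩ InvSet τ' ∧
      InvSet ρ = InvSet τ ∪ InvSet τ' ∧
      permMatrix τ + permMatrix τ' = permMatrix π + permMatrix ρ := by
  obtain ⟨π, hπ⟩ := exists_invSet_eq (pairTransitive_inter_invSet τ τ') hcot fun p hp => hp.1.1
  obtain ⟨ρ, hρ⟩ := exists_invSet_eq htr (pairCotransitive_union_invSet τ τ') fun p hp =>
    hp.elim (·.1) (·.1)
  refine ⟨π, ρ, hπ, hρ, funext fun p => ?_⟩
  by_cases h : Touches (InvSet τ \ InvSet τ') p.1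
  · obtain ⟨hπp, hρp⟩ := apply_eq_of_not_touches_sdiff (Set.inter_comm _ _ ▸ hπ)
      (Set.union_comm _ _ ▸ hρ) (hsep p.1 ⟨h, ·⟩)
    simp [permMatrix, hπp, hρp, add_comm]
  · obtain ⟨hπp, hρp⟩ := apply_eq_of_not_touches_sdiff hπ hρ h
    simp [permMatrix, hπp, hρp]

end MeetJoin

section PeakFree

/-- For `S = InvSet τ`: no `τ j` exceeds both `τ i` and `τ k` with `i < j < k`, that is,
`τ` avoids `132` and `231`. -/
def PeakFree (S : Set (Fin n × Fin n)) : Prop :=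
  ∀ ⦃i j k⦄, i < j → j < k → (j, k) ∈ S → (i, j) ∈ S

lemma PeakFree.inter {S S' : Set (Fin n × Fin n)} (h : PeakFree S) (h' : PeakFree S') :
    PeakFree (S ∩ S') :=
  fun _ _ _ hij hjk hS => ⟨h hij hjk hS.1, h' hij hjk hS.2⟩

lemma PeakFree.union {S S' : Set (Fin n × Fin n)} (h : PeakFree S) (h' : PeakFree S') :
    PeakFree (S ∪ S') :=
  fun _ _ _ hij hjk hS => hS.imp (h hij hjk) (h' hij hjk)

lemma PeakFree.mem_of_mem_invSet {σ : Equiv.Perm (Fin n)} (hσ : PeakFree (InvSet σ))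
    {i j k : Fin n} (hij : i < j) (hjk : j < k) (hik : (i, k) ∈ InvSet σ) : (i, j) ∈ InvSet σ :=
  (pairCotransitive_invSet σ hij hjk hik).elim id (hσ hij hjk)

lemma mem_av132312_iff {σ : Equiv.Perm (Fin n)} : σ ∈ Av132312 n ↔ PeakFree (InvSet σ⁻¹) := by
  simp only [Av132312, Set.mem_ofPred_eq, containsPattern_p132_iff, containsPattern_p312_iff]
  constructor
  · rintro ⟨h132, h312⟩ a b c hab hbc ⟨-, hcb⟩
    refine ⟨hab, lt_of_not_ge fun hab' => ?_⟩
    have hab' : σ⁻¹ a < σ⁻¹ b := lt_of_le_of_ne hab' (σ⁻¹.injective.ne hab.ne)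
    rcases lt_or_gt_of_ne (σ⁻¹.injective.ne (hab.trans hbc).ne) with hac | hca
    · exact h132 ⟨_, _, _, hac, hcb, by simpa using hab, by simpa using hbc⟩
    · exact h312 ⟨_, _, _, hca, hab', by simpa using hab, by simpa using hbc⟩
  · intro h
    constructor
    · rintro ⟨i, j, k, hij, hjk, hik, hkj⟩
      exact (h hik hkj ⟨hkj, by simpa using hjk⟩).2.not_gt (by simpa using hij.trans hjk)
    · rintro ⟨i, j, k, hij, hjk, hjk', hki⟩
      exact (h hjk' hki ⟨hki, by simpa using hij.trans hjk⟩).2.not_gt (by simpa using hjk)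

variable {τ τ' : Equiv.Perm (Fin n)} (hτ : PeakFree (InvSet τ)) (hτ' : PeakFree (InvSet τ'))
include hτ hτ'

lemma pairCotransitive_inter_of_peakFree : PairCotransitive (InvSet τ ∩ InvSet τ') :=
  fun _ _ _ hij hjk hik =>
    Or.inl ⟨hτ.mem_of_mem_invSet hij hjk hik.1, hτ'.mem_of_mem_invSet hij hjk hik.2⟩

lemma pairTransitive_union_of_peakFree : PairTransitive (InvSet τ ∪ InvSet τ') := by
  rintro i j k hij (hjk | hjk)
  · have hij' : i < j := hij.elim (·.1) (·.1)
    exact Or.inl (pairTransitive_invSet τ (hτ hij' hjk.1 hjk) hjk)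
  · have hij' : i < j := hij.elim (·.1) (·.1)
    exact Or.inr (pairTransitive_invSet τ' (hτ' hij' hjk.1 hjk) hjk)

lemma not_touches_sdiff_and_of_peakFree (i : Fin n) :
    ¬ (Touches (InvSet τ \ InvSet τ') i ∧ Touches (InvSet τ' \ InvSet τ) i) := by
  rintro ⟨⟨j, ⟨hj, hj'⟩ | ⟨hj, hj'⟩⟩, ⟨k, ⟨hk, hk'⟩ | ⟨hk, hk'⟩⟩⟩
  · rcases lt_trichotomy j k with hjk | rfl | hkj
    · exact hj' (pairTransitive_invSet τ' (hτ' hjk hk.1 hk) hk)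
    · exact hk' hj
    · exact hk' (pairTransitive_invSet τ (hτ hkj hj.1 hj) hj)
  · exact hj' (hτ' hj.1 hk.1 hk)
  · exact hk' (hτ hk.1 hj.1 hj)
  · rcases lt_trichotomy j k with hjk | rfl | hkj
    · exact hj' (hτ'.mem_of_mem_invSet hj.1 hjk hk)
    · exact hk' hj
    · exact hk' (hτ.mem_of_mem_invSet hk.1 hkj hj)

lemma exists_invSet_eq_inter_union_of_peakFree :
    ∃ π ρ : Equiv.Perm (Fin n), PeakFree (InvSet π) ∧ PeakFree (InvSet ρ) ∧
      InvSet π = InvSet τ ∩ InvSet τ' ∧ InvSet ρ = InvSet τ ∪ InvSet τ' ∧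
      permMatrix τ + permMatrix τ' = permMatrix π + permMatrix ρ := by
  obtain ⟨π, ρ, hπ, hρ, hM⟩ := exists_invSet_eq_inter_union
    (pairCotransitive_inter_of_peakFree hτ hτ') (pairTransitive_union_of_peakFree hτ hτ')
    (not_touches_sdiff_and_of_peakFree hτ hτ')
  exact ⟨π, ρ, hπ ▸ hτ.inter hτ', hρ ▸ hτ.union hτ', hπ, hρ, hM⟩

end PeakFree

lemma invv_eq_invSet_inv (σ : Equiv.Perm (Fin n)) : Invv σ = InvSet σ⁻¹ := by
  ext ⟨a, b⟩
  constructor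
  · rintro ⟨i, j, hij, hji, h⟩
    simp only [Prod.mk.injEq] at h
    obtain ⟨rfl, rfl⟩ := h
    exact ⟨hji, by simpa using hij⟩
  · rintro ⟨hab, hba⟩
    exact ⟨σ⁻¹ b, σ⁻¹ a, hba, by simpa using hab, by simp⟩

lemma permMatrix_inv (σ : Equiv.Perm (Fin n)) (p : Fin n × Fin n) :
    permMatrix σ⁻¹ p = permMatrix σ p.swap := by
  simp only [permMatrix, Equiv.Perm.inv_eq_iff_eq, Prod.fst_swap, Prod.snd_swap]
  exact if_congr eq_comm rfl rfl

lemma av132312_meet_join {σ σ' : Equiv.Perm (Fin n)} (hσ : σ ∈ Av132312 n)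
    (hσ' : σ' ∈ Av132312 n) :
    ∃ π ∈ Av132312 n, ∃ ρ ∈ Av132312 n, Invv π = Invv σ ∩ Invv σ' ∧
      Invv ρ = Invv σ ∪ Invv σ' ∧ permMatrix σ + permMatrix σ' = permMatrix π + permMatrix ρ := by
  rw [mem_av132312_iff] at hσ hσ'
  obtain ⟨π, ρ, hπ, hρ, hinter, hunion, hM⟩ := exists_invSet_eq_inter_union_of_peakFree hσ hσ'
  refine ⟨π⁻¹, by rwa [mem_av132312_iff, inv_inv], ρ⁻¹, by rwa [mem_av132312_iff, inv_inv],
    ?_, ?_, funext fun p => ?_⟩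
  · simp only [invv_eq_invSet_inv, inv_inv, hinter]
  · simp only [invv_eq_invSet_inv, inv_inv, hunion]
  · simpa [permMatrix_inv] using congrFun hM p.swap

section Blocking

variable {F : Set (Fin n × Fin n)}
  (hF : ∀ ⦃i j k : Fin n⦄, i < j → j < k → (i, j) ∈ F ∨ (j, k) ∈ F)
include hF

lemma pairCotransitive_of_subset {S : Set (Fin n × Fin n)} (hS : F ⊆ S) : PairCotransitive S :=
  fun _ _ _ hij hjk _ => (hF hij hjk).imp (@hS _) (@hS _)

variable {τ τ' : Equiv.Perm (Fin n)} (hτ : F ⊆ InvSet τ) (hτ' : F ⊆ InvSet τ')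
include hτ hτ'

lemma pairTransitive_union_of_subset : PairTransitive (InvSet τ ∪ InvSet τ') := by
  intro i j k hij hjk
  rcases hF (hij.elim (·.1) (·.1)) (hjk.elim (·.1) (·.1)) with h | h
  · exact hjk.imp (pairTransitive_invSet τ (hτ h)) (pairTransitive_invSet τ' (hτ' h))
  · exact hij.imp (pairTransitive_invSet τ · (hτ h)) (pairTransitive_invSet τ' · (hτ' h))

lemma not_touches_sdiff_and_of_subset (i : Fin n) :
    ¬ (Touches (InvSet τ \ InvSet τ') i ∧ Touches (InvSet τ' \ InvSet τ) i) := by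
  rintro ⟨⟨j, ⟨hj, hj'⟩ | ⟨hj, hj'⟩⟩, ⟨k, ⟨hk, hk'⟩ | ⟨hk, hk'⟩⟩⟩
  · rcases lt_trichotomy j k with hjk | rfl | hkj
    · exact (hF hjk hk.1).elim (fun h => hj' (pairTransitive_invSet τ' (hτ' h) hk))
        (fun h => hk' (hτ h))
    · exact hk' hj
    · exact (hF hkj hj.1).elim (fun h => hk' (pairTransitive_invSet τ (hτ h) hj))
        (fun h => hj' (hτ' h))
  · exact (hF hj.1 hk.1).elim (fun h => hj' (hτ' h)) (fun h => hk' (hτ h))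
  · exact (hF hk.1 hj.1).elim (fun h => hk' (hτ h)) (fun h => hj' (hτ' h))
  · rcases lt_trichotomy j k with hjk | rfl | hkj
    · exact (hF hj.1 hjk).elim (fun h => hj' (hτ' h))
        (fun h => hk' (pairTransitive_invSet τ hj (hτ h)))
    · exact hk' hj
    · exact (hF hk.1 hkj).elim (fun h => hk' (hτ h))
        (fun h => hj' (pairTransitive_invSet τ' hk (hτ' h)))

end Blocking

section Alternating

/-- Pairs of positions (0-based) that are inversions of every alternating permutation avoiding
`123`: everything after a peak is smaller than it, everything before a valley that is not the
last position is larger than it. -/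
def altForced (n : ℕ) : Set (Fin n × Fin n) :=
  {p | p.1 < p.2 ∧ (Odd (p.1 : ℕ) ∨ (Even (p.2 : ℕ) ∧ (p.2 : ℕ) + 1 < n))}

def altAscents (n : ℕ) : Set (Fin n × Fin n) :=
  {p | Even (p.1 : ℕ) ∧ (p.2 : ℕ) = p.1 + 1}

lemma mem_altForced_or_mem_altForced {i j k : Fin n} (hij : i < j) (hjk : j < k) :
    (i, j) ∈ altForced n ∨ (j, k) ∈ altForced n := by
  rcases Nat.even_or_odd (j : ℕ) with h | h
  · exact Or.inl ⟨hij, Or.inr ⟨h, show (j : ℕ) + 1 < n by have := k.isLt; omega⟩⟩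
  · exact Or.inr ⟨hjk, Or.inl h⟩

lemma alternating_iff {σ : Equiv.Perm (Fin n)} :
    Alternating σ ↔ ∀ i j : Fin n, (j : ℕ) = i + 1 → ((i, j) ∈ InvSet σ ↔ Odd (i : ℕ)) := by
  constructor
  · rintro h i ⟨j, hj⟩ rfl
    obtain ⟨heven, hodd⟩ := h i hj
    have hlt : i < ⟨i + 1, by omega⟩ := Fin.lt_def.2 (by simp)
    rcases Nat.even_or_odd (i : ℕ) with hi | hi
    · simp [InvSet, hlt, (heven hi).not_gt, Nat.not_odd_iff_even.2 hi]
    · exact iff_of_true ⟨hlt, hodd hi⟩ hi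
  · intro h i hi
    have := h ⟨i, by omega⟩ ⟨i + 1, hi⟩ rfl
    refine ⟨fun he => ?_, fun ho => (this.2 ho).2⟩
    refine lt_of_le_of_ne (not_lt.1 fun hlt => ?_) (σ.injective.ne (by simp))
    exact Nat.not_odd_iff_even.2 he (this.1 ⟨Fin.lt_def.2 (by simp), hlt⟩)

lemma apply_lt_apply_of_not_mem_invSet {σ : Equiv.Perm (Fin n)} {i j : Fin n} (hij : i < j)
    (h : (i, j) ∉ InvSet σ) : σ i < σ j :=
  (apply_lt_apply_iff_valueLT σ i j).2 (Or.inl ⟨hij, h⟩)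

lemma mem_altAv123_iff {σ : Equiv.Perm (Fin n)} :
    σ ∈ AltAv123 n ↔ altForced n ⊆ InvSet σ ∧ InvSet σ ⊆ (altAscents n)ᶜ := by
  simp only [AltAv123, Set.mem_ofPred_eq, containsPattern_p123_iff, alternating_iff]
  constructor
  · rintro ⟨halt, h123⟩
    refine ⟨?_, fun ⟨i, j⟩ hij ⟨hi, hj⟩ => Nat.not_odd_iff_even.2 hi ((halt i j hj).1 hij)⟩
    rintro ⟨i, j⟩ ⟨hij : i < j, hi | ⟨hj, hjn⟩⟩
    all_goals refine ⟨hij, lt_of_not_ge fun hle => h123 ?_⟩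
    all_goals have hij' := lt_of_le_of_ne hle (σ.injective.ne hij.ne)
    · have hi' : (i : ℕ) - 1 + 1 = i := Nat.sub_add_cancel hi.pos
      let i' : Fin n := ⟨i - 1, by omega⟩
      have hi'i : i' < i := Fin.lt_def.2 (by simp [i']; omega)
      have hnot : (i', i) ∉ InvSet σ := fun h =>
        Nat.not_odd_iff_even.2 (Nat.Odd.sub_odd hi odd_one) ((halt i' i hi'.symm).1 h)
      exact ⟨i', i, j, hi'i, hij, apply_lt_apply_of_not_mem_invSet hi'i hnot, hij'⟩
    · let j' : Fin n := ⟨j + 1, hjn⟩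
      have hjj' : j < j' := Fin.lt_def.2 (by simp [j'])
      have hnot : (j, j') ∉ InvSet σ := fun h => Nat.not_odd_iff_even.2 hj ((halt j j' rfl).1 h)
      exact ⟨i, j, j', hij, hjj', hij', apply_lt_apply_of_not_mem_invSet hjj' hnot⟩
  · rintro ⟨hforced, hasc⟩
    refine ⟨fun i j hij => ⟨fun h => ?_, fun h => hforced ⟨?_, Or.inl h⟩⟩, ?_⟩
    · exact Nat.not_even_iff_odd.1 fun he => hasc h ⟨he, hij⟩
    · exact show i < j from Fin.lt_def.2 (by omega)
    · rintro ⟨i, j, k, hij, hjk, h1, h2⟩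
      rcases mem_altForced_or_mem_altForced hij hjk with h | h
      exacts [(hforced h).2.not_gt h1, (hforced h).2.not_gt h2]

end Alternating

lemma altAv123_meet_join {σ σ' : Equiv.Perm (Fin n)} (hσ : σ ∈ AltAv123 n)
    (hσ' : σ' ∈ AltAv123 n) :
    ∃ π ∈ AltAv123 n, ∃ ρ ∈ AltAv123 n, InvSet π = InvSet σ ∩ InvSet σ' ∧
      InvSet ρ = InvSet σ ∪ InvSet σ' ∧
      permMatrix σ + permMatrix σ' = permMatrix π + permMatrix ρ := by
  rw [mem_altAv123_iff] at hσ hσ'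
  have hF : ∀ ⦃i j k : Fin n⦄, i < j → j < k → (i, j) ∈ altForced n ∨ (j, k) ∈ altForced n :=
    fun _ _ _ => mem_altForced_or_mem_altForced
  obtain ⟨π, ρ, hπ, hρ, hM⟩ := exists_invSet_eq_inter_union
    (pairCotransitive_of_subset hF (Set.subset_inter hσ.1 hσ'.1))
    (pairTransitive_union_of_subset hF hσ.1 hσ'.1) (not_touches_sdiff_and_of_subset hF hσ.1 hσ'.1)
  refine ⟨π, mem_altAv123_iff.2 ⟨?_, ?_⟩, ρ, mem_altAv123_iff.2 ⟨?_, ?_⟩, hπ, hρ, hM⟩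
  · exact hπ ▸ Set.subset_inter hσ.1 hσ'.1
  · exact hπ ▸ Set.inter_subset_left.trans hσ.2
  · exact hρ ▸ hσ.1.trans Set.subset_union_left
  · exact hρ ▸ Set.union_subset hσ.2 hσ'.2

lemma isMeet_of_eq_inter {α β : Type*} (f : β → Set α) (C : Set β) {a b x : β}
    (h : f x = f a ∩ f b) :
    f x ⊆ f a ∧ f x ⊆ f b ∧ ∀ γ ∈ C, f γ ⊆ f a → f γ ⊆ f b → f γ ⊆ f x := by
  rw [h]
  exact ⟨Set.inter_subset_left, Set.inter_subset_right, fun _ _ => Set.subset_inter⟩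

lemma isJoin_of_eq_union {α β : Type*} (f : β → Set α) (C : Set β) {a b x : β}
    (h : f x = f a ∪ f b) :
    f a ⊆ f x ∧ f b ⊆ f x ∧ ∀ γ ∈ C, f a ⊆ f γ → f b ⊆ f γ → f x ⊆ f γ := by
  rw [h]
  exact ⟨Set.subset_union_left, Set.subset_union_right, fun _ _ => Set.union_subset⟩

theorem stmt16_general (n : ℕ) :
    -- Q = Av_n(132,312) with the right weak order
    (∀ σ ∈ Av132312 n, ∀ σ' ∈ Av132312 n,
      ∃ π ∈ Av132312 n, ∃ ρ ∈ Av132312 n,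
        -- π is the greatest lower bound of {σ, σ'} in Q
        (Invv π ⊆ Invv σ ∧ Invv π ⊆ Invv σ' ∧
          ∀ γ ∈ Av132312 n, Invv γ ⊆ Invv σ → Invv γ ⊆ Invv σ' → Invv γ ⊆ Invv π) ∧
        -- ρ is the least upper bound of {σ, σ'} in Q
        (Invv σ ⊆ Invv ρ ∧ Invv σ' ⊆ Invv ρ ∧
          ∀ γ ∈ Av132312 n, Invv σ ⊆ Invv γ → Invv σ' ⊆ Invv γ → Invv ρ ⊆ Invv γ) ∧
        permMatrix σ + permMatrix σ' = permMatrix π + permMatrix ρ) ∧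
    -- Q = AltAv_n(123) with the left weak order
    (∀ σ ∈ AltAv123 n, ∀ σ' ∈ AltAv123 n,
      ∃ π ∈ AltAv123 n, ∃ ρ ∈ AltAv123 n,
        (InvSet π ⊆ InvSet σ ∧ InvSet π ⊆ InvSet σ' ∧
          ∀ γ ∈ AltAv123 n, InvSet γ ⊆ InvSet σ → InvSet γ ⊆ InvSet σ' → InvSet γ ⊆ InvSet π) ∧
        (InvSet σ ⊆ InvSet ρ ∧ InvSet σ' ⊆ InvSet ρ ∧
          ∀ γ ∈ AltAv123 n, InvSet σ ⊆ InvSet γ → InvSet σ' ⊆ InvSet γ → InvSet ρ ⊆ InvSet γ) ∧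
        permMatrix σ + permMatrix σ' = permMatrix π + permMatrix ρ) := by
  refine ⟨fun σ hσ σ' hσ' => ?_, fun σ hσ σ' hσ' => ?_⟩
  · obtain ⟨π, hπ, ρ, hρ, hinf, hsup, hM⟩ := av132312_meet_join hσ hσ'
    exact ⟨π, hπ, ρ, hρ, isMeet_of_eq_inter Invv _ hinf, isJoin_of_eq_union Invv _ hsup, hM⟩
  · obtain ⟨π, hπ, ρ, hρ, hinf, hsup, hM⟩ := altAv123_meet_join hσ hσ'
    exact ⟨π, hπ, ρ, hρ, isMeet_of_eq_inter InvSet _ hinf, isJoin_of_eq_union InvSet _ hsup, hM⟩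

theorem stmt16 (n : ℕ) (hn : 1 ≤ n) :
    -- Q = Av_n(132,312) with the right weak order
    (∀ σ ∈ Av132312 n, ∀ σ' ∈ Av132312 n,
      ∃ π ∈ Av132312 n, ∃ ρ ∈ Av132312 n,
        -- π is the greatest lower bound of {σ, σ'} in Q
        (Invv π ⊆ Invv σ ∧ Invv π ⊆ Invv σ' ∧
          ∀ γ ∈ Av132312 n, Invv γ ⊆ Invv σ → Invv γ ⊆ Invv σ' → Invv γ ⊆ Invv π) ∧
        -- ρ is the least upper bound of {σ, σ'} in Q
        (Invv σ ⊆ Invv ρ ∧ Invv σ' ⊆ Invv ρ ∧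
          ∀ γ ∈ Av132312 n, Invv σ ⊆ Invv γ → Invv σ' ⊆ Invv γ → Invv ρ ⊆ Invv γ) ∧
        permMatrix σ + permMatrix σ' = permMatrix π + permMatrix ρ) ∧
    -- Q = AltAv_n(123) with the left weak order
    (∀ σ ∈ AltAv123 n, ∀ σ' ∈ AltAv123 n,
      ∃ π ∈ AltAv123 n, ∃ ρ ∈ AltAv123 n,
        (InvSet π ⊆ InvSet σ ∧ InvSet π ⊆ InvSet σ' ∧
          ∀ γ ∈ AltAv123 n, InvSet γ ⊆ InvSet σ → InvSet γ ⊆ InvSet σ' → InvSet γ ⊆ InvSet π) ∧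
        (InvSet σ ⊆ InvSet ρ ∧ InvSet σ' ⊆ InvSet ρ ∧
          ∀ γ ∈ AltAv123 n, InvSet σ ⊆ InvSet γ → InvSet σ' ⊆ InvSet γ → InvSet ρ ⊆ InvSet γ) ∧
        permMatrix σ + permMatrix σ' = permMatrix π + permMatrix ρ) :=
  stmt16_general n
end
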